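/- arXiv:1604.05001 — 2 statements merged into one kernel-verified Lean document; each statement's English description precedes it below -/
import Mathlib

section
/- Let H ∈ ℂ^{n×m}, V ∈ ℂ^{m×d}, J positive definite Hermitian, and for U ∈ ℂ^{n×d} let E(U) = (I − U†HV)(I − U†HV)† + U†JU. Then max over U of log det(E(U)⁻¹), taken over U such that E(U) is invertible, equals log det(I + V†H†J⁻¹HV), and the maximum is attained at U* = (HVV†H† + J)⁻¹HV. -/
/-!
Write `A = HV` and `S = AA† + J`, which is positive definite. Completing the square gives
`E(U) = (U - U*)† S (U - U*) + (I - A† S⁻¹ A)`, and by the Woodbury identity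
`I - A† S⁻¹ A = (I + A† J⁻¹ A)⁻¹ = E(U*)`. Adding a positive semidefinite `P` to a positive
definite `B` can only increase the determinant: `B + P = √B (I + B^{-1/2} P B^{-1/2}) √B` and the
second factor has eigenvalues `≥ 1`. Hence `det E(U) ≥ det E(U*)`, and `log det E⁻¹ = -log det E`.
-/

open Matrix ComplexOrder

namespace Matrix

variable {𝕜 : Type*} [RCLike 𝕜] {n d : Type*} [Fintype n] [Fintype d]

theorem posDef_mul_conjTranspose_self_add {A : Matrix n d 𝕜} {J : Matrix n n 𝕜}
    (hJ : J.PosDef) : (A * Aᴴ + J).PosDef := by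
  rw [add_comm]
  exact hJ.add_posSemidef (posSemidef_self_mul_conjTranspose A)

variable [DecidableEq n] [DecidableEq d]

theorem IsHermitian.det_one_add {Q : Matrix n n 𝕜} (hQ : Q.IsHermitian) :
    (1 + Q).det = ∏ i, (1 + (hQ.eigenvalues i : 𝕜)) := by
  set W : Matrix n n 𝕜 := ↑hQ.eigenvectorUnitary
  have hWW : W * star W = 1 := Unitary.mul_star_self_of_mem hQ.eigenvectorUnitary.2
  have hdiag : 1 + Q = W * (1 + diagonal (RCLike.ofReal ∘ hQ.eigenvalues)) * star W := by
    conv_lhs => rw [hQ.spectral_theorem]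
    rw [Unitary.conjStarAlgAut_apply, mul_add, add_mul, mul_one, hWW]
  rw [hdiag, det_mul_right_comm, hWW, one_mul, ← diagonal_one, diagonal_add, det_diagonal]
  rfl

theorem PosSemidef.one_le_det_one_add {Q : Matrix n n 𝕜} (hQ : Q.PosSemidef) :
    1 ≤ (1 + Q).det := by
  rw [hQ.isHermitian.det_one_add]
  calc (1 : 𝕜) = ∏ _i : n, 1 := Finset.prod_const_one.symm
    _ ≤ _ := Finset.prod_le_prod (fun _ _ => zero_le_one) fun i _ =>
      le_add_of_nonneg_right (RCLike.ofReal_nonneg.mpr (hQ.eigenvalues_nonneg i))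

open scoped MatrixOrder in
theorem PosDef.det_le_det_add {B P : Matrix n n 𝕜} (hB : B.PosDef) (hP : P.PosSemidef) :
    B.det ≤ (B + P).det := by
  set R := CFC.sqrt B
  have hRR : R * R = B := CFC.sqrt_mul_sqrt_self B hB.posSemidef.nonneg
  have hR : R.IsHermitian := (CFC.sqrt_nonneg B).posSemidef.isHermitian
  have hRu : IsUnit R.det :=
    isUnit_mul_self_iff.mp (by rw [← det_mul, hRR]; exact hB.det_pos.ne'.isUnit)
  have hfactor : B + P = R * (1 + R⁻¹ * P * R⁻¹) * R := by
    rw [mul_add, add_mul, mul_one, hRR, ← mul_assoc, ← mul_assoc, mul_nonsing_inv R hRu, one_mul,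
      mul_assoc, nonsing_inv_mul R hRu, mul_one]
  have hQ : (R⁻¹ * P * R⁻¹).PosSemidef := by
    simpa [conjTranspose_nonsing_inv, hR.eq] using hP.conjTranspose_mul_mul_same R⁻¹
  calc B.det = B.det * 1 := (mul_one _).symm
    _ ≤ B.det * (1 + R⁻¹ * P * R⁻¹).det :=
        mul_le_mul_of_nonneg_left hQ.one_le_det_one_add hB.det_pos.le
    _ = (B + P).det := by rw [hfactor, det_mul_right_comm, hRR, det_mul]

theorem inv_one_add_mul_inv_mul {α : Type*} [CommRing α] {A : Matrix n d α} {B : Matrix d n α}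
    {J : Matrix n n α} (hJ : IsUnit J) (hS : IsUnit (A * B + J)) :
    (1 + B * J⁻¹ * A)⁻¹ = 1 - B * (A * B + J)⁻¹ * A := by
  have hJJ : J⁻¹⁻¹ = J := nonsing_inv_nonsing_inv J ((isUnit_iff_isUnit_det J).mp hJ)
  have h := add_mul_mul_inv_eq_sub (1 : Matrix d d α) B J⁻¹ A isUnit_one
    (isUnit_nonsing_inv_iff.mpr hJ)
    (by simpa only [hJJ, inv_one, Matrix.mul_one, add_comm] using hS)
  simpa only [hJJ, inv_one, Matrix.mul_one, Matrix.one_mul, add_comm J] using h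

theorem PosDef.log_re_det_inv {Z : Matrix n n 𝕜} (hZ : Z.PosDef) :
    Real.log (RCLike.re Z⁻¹.det) = -Real.log (RCLike.re Z.det) := by
  obtain ⟨r, -, hr⟩ := RCLike.pos_iff_exists_ofReal.mp hZ.det_pos
  rw [det_nonsing_inv, Ring.inverse_eq_inv, ← hr, ← RCLike.ofReal_inv, RCLike.ofReal_re,
    RCLike.ofReal_re, Real.log_inv]

/-- The paper's `E(U)` is `mseMatrix (H * V) J U`. -/
def mseMatrix (A : Matrix n d 𝕜) (J : Matrix n n 𝕜) (U : Matrix n d 𝕜) : Matrix d d 𝕜 :=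
  (1 - Uᴴ * A) * (1 - Uᴴ * A)ᴴ + Uᴴ * J * U

variable {A : Matrix n d 𝕜} {J : Matrix n n 𝕜}

theorem mseMatrix_eq_completeSquare (hJ : J.IsHermitian) (hS : IsUnit (A * Aᴴ + J).det)
    (U : Matrix n d 𝕜) :
    mseMatrix A J U = (U - (A * Aᴴ + J)⁻¹ * A)ᴴ * (A * Aᴴ + J) * (U - (A * Aᴴ + J)⁻¹ * A)
      + (1 - Aᴴ * (A * Aᴴ + J)⁻¹ * A) := by
  have hW : ((A * Aᴴ + J)⁻¹)ᴴ = (A * Aᴴ + J)⁻¹ := by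
    rw [conjTranspose_nonsing_inv, ((isHermitian_mul_conjTranspose_self A).add hJ).eq]
  have hSW (X : Matrix n d 𝕜) : (A * Aᴴ + J) * ((A * Aᴴ + J)⁻¹ * X) = X := by
    rw [← Matrix.mul_assoc, mul_nonsing_inv _ hS, Matrix.one_mul]
  have hWS (X : Matrix n d 𝕜) : (A * Aᴴ + J)⁻¹ * ((A * Aᴴ + J) * X) = X := by
    rw [← Matrix.mul_assoc, nonsing_inv_mul _ hS, Matrix.one_mul]
  generalize (A * Aᴴ + J)⁻¹ = W at hW hSW hWS
  simp only [mseMatrix, conjTranspose_sub, conjTranspose_mul, conjTranspose_one,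
    conjTranspose_conjTranspose, hW, Matrix.sub_mul, Matrix.mul_sub, Matrix.mul_assoc,
    Matrix.one_mul, Matrix.mul_one, hSW, hWS]
  simp only [Matrix.add_mul, Matrix.mul_add, Matrix.mul_assoc]
  abel

theorem posDef_one_add_conjTranspose_mul_inv_mul (hJ : J.PosDef) :
    (1 + Aᴴ * J⁻¹ * A).PosDef :=
  PosDef.one.add_posSemidef (hJ.inv.posSemidef.conjTranspose_mul_mul_same A)

theorem mseMatrix_eq_add_inv (hJ : J.PosDef) (U : Matrix n d 𝕜) :
    mseMatrix A J U = (U - (A * Aᴴ + J)⁻¹ * A)ᴴ * (A * Aᴴ + J) * (U - (A * Aᴴ + J)⁻¹ * A)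
      + (1 + Aᴴ * J⁻¹ * A)⁻¹ := by
  have hS := posDef_mul_conjTranspose_self_add (A := A) hJ
  rw [mseMatrix_eq_completeSquare hJ.isHermitian hS.det_pos.ne'.isUnit,
    inv_one_add_mul_inv_mul hJ.isUnit hS.isUnit]

theorem mseMatrix_posDef (hJ : J.PosDef) (U : Matrix n d 𝕜) : (mseMatrix A J U).PosDef := by
  rw [mseMatrix_eq_add_inv hJ, add_comm _ (1 + Aᴴ * J⁻¹ * A)⁻¹]
  exact (posDef_one_add_conjTranspose_mul_inv_mul hJ).inv.add_posSemidef
    ((posDef_mul_conjTranspose_self_add hJ).posSemidef.conjTranspose_mul_mul_same _)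

theorem det_inv_le_det_mseMatrix (hJ : J.PosDef) (U : Matrix n d 𝕜) :
    (1 + Aᴴ * J⁻¹ * A)⁻¹.det ≤ (mseMatrix A J U).det := by
  rw [mseMatrix_eq_add_inv hJ, add_comm _ (1 + Aᴴ * J⁻¹ * A)⁻¹]
  exact (posDef_one_add_conjTranspose_mul_inv_mul hJ).inv.det_le_det_add
    ((posDef_mul_conjTranspose_self_add hJ).posSemidef.conjTranspose_mul_mul_same _)

theorem mseMatrix_wiener (hJ : J.PosDef) :
    mseMatrix A J ((A * Aᴴ + J)⁻¹ * A) = (1 + Aᴴ * J⁻¹ * A)⁻¹ := by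
  rw [mseMatrix_eq_add_inv hJ, sub_self, conjTranspose_zero, Matrix.zero_mul, Matrix.zero_mul,
    zero_add]

theorem log_re_det_inv_mseMatrix_le (hJ : J.PosDef) (U : Matrix n d 𝕜) :
    Real.log (RCLike.re (mseMatrix A J U)⁻¹.det) ≤
      Real.log (RCLike.re (1 + Aᴴ * J⁻¹ * A).det) := by
  have hG := posDef_one_add_conjTranspose_mul_inv_mul (A := A) hJ
  rw [(mseMatrix_posDef hJ U).log_re_det_inv, ← nonsing_inv_nonsing_inv _ hG.det_pos.ne'.isUnit,
    hG.inv.log_re_det_inv, neg_le_neg_iff]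
  exact Real.log_le_log (RCLike.pos_iff.mp hG.inv.det_pos).1
    (RCLike.le_iff_re_im.mp (det_inv_le_det_mseMatrix hJ U)).1

theorem inv_mseMatrix_wiener (hJ : J.PosDef) :
    (mseMatrix A J ((A * Aᴴ + J)⁻¹ * A))⁻¹ = 1 + Aᴴ * J⁻¹ * A := by
  rw [mseMatrix_wiener hJ, nonsing_inv_nonsing_inv _
    (posDef_one_add_conjTranspose_mul_inv_mul hJ).det_pos.ne'.isUnit]

end Matrix

/-- The rate equals the maximum over linear receivers of `log det(E(U)⁻¹)`:
with `E(U) = (I − U†HV)(I − U†HV)† + U†JU`, the maximum of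
`log det(E(U)⁻¹)` over `U` with `E(U)` invertible equals
`log det(I + V†H†J⁻¹HV)`, attained at `U* = (HVV†H† + J)⁻¹HV`. -/
theorem rate_eq_max_logdet_inv_mse
    {n m d : ℕ} (H : Matrix (Fin n) (Fin m) ℂ) (V : Matrix (Fin m) (Fin d) ℂ)
    (J : Matrix (Fin n) (Fin n) ℂ) (hJ : J.PosDef) :
    (∀ U : Matrix (Fin n) (Fin d) ℂ,
      IsUnit ((1 - Uᴴ * (H * V)) * (1 - Uᴴ * (H * V))ᴴ + Uᴴ * J * U).det →
      Real.log (((1 - Uᴴ * (H * V)) * (1 - Uᴴ * (H * V))ᴴ + Uᴴ * J * U)⁻¹).det.re ≤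
        Real.log (1 + Vᴴ * Hᴴ * J⁻¹ * (H * V)).det.re) ∧
    (letI Ustar := (H * V * Vᴴ * Hᴴ + J)⁻¹ * (H * V)
     IsUnit ((1 - Ustarᴴ * (H * V)) * (1 - Ustarᴴ * (H * V))ᴴ + Ustarᴴ * J * Ustar).det ∧
     Real.log (((1 - Ustarᴴ * (H * V)) * (1 - Ustarᴴ * (H * V))ᴴ +
         Ustarᴴ * J * Ustar)⁻¹).det.re =
       Real.log (1 + Vᴴ * Hᴴ * J⁻¹ * (H * V)).det.re) := by
  have hVH : Vᴴ * Hᴴ = (H * V)ᴴ := (conjTranspose_mul H V).symm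
  have hHVVH : H * V * Vᴴ * Hᴴ = H * V * (H * V)ᴴ := by rw [Matrix.mul_assoc, hVH]
  rw [hVH, hHVVH]
  refine ⟨fun U _ => log_re_det_inv_mseMatrix_le hJ U,
    (mseMatrix_posDef hJ _).det_pos.ne'.isUnit, ?_⟩
  exact congrArg (fun M : Matrix (Fin d) (Fin d) ℂ => Real.log M.det.re) (inv_mseMatrix_wiener hJ)
end

section
/- The function (K_1, …, K_K) ↦ Σ_{k=1}^K α_k [log det(Σ_{j≥k} H_j K_j H_j† + Λ) − log det(Σ_{j>k} H_j K_j H_j† + Λ)] with weights 0 ≤ α_1 ≤ α_2 ≤ … ≤ α_K is concave on the product of positive semidefinite cones, where H_j are fixed complex matrices and Λ is a fixed positive definite Hermitian matrix. -/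
open Matrix ComplexOrder Finset
open scoped MatrixOrder

/-!
By Abel summation the objective is `Σ_k (α_k - α_{k-1}) log det (Σ_{j ≥ k} H_j K_j H_jᴴ + Λ)`
minus a constant, a combination with nonnegative coefficients of `log det` composed with affine
maps into the positive definite cone. There `log det` is concave: congruence by `A^{-1/2}` turns
`log det (a A + b B) ≥ a log det A + b log det B` into the same inequality for `A = 1`, which is
the concavity of `Real.log` applied to the eigenvalues of `A^{-1/2} B A^{-1/2}`.
-/

namespace Matrix

variable {𝕜 n m ι : Type*} [RCLike 𝕜]

theorem convex_setOf_posSemidef : Convex ℝ {A : Matrix n n 𝕜 | A.PosSemidef} :=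
  fun _ hA _ hB _ _ ha hb _ => (hA.smul ha).add (hB.smul hb)

theorem convex_setOf_forall_posSemidef :
    Convex ℝ {Ks : ι → Matrix m m 𝕜 | ∀ k, (Ks k).PosSemidef} :=
  fun _ hX _ hY _ _ ha hb hab k => convex_setOf_posSemidef (hX k) (hY k) ha hb hab

theorem convex_setOf_posDef : Convex ℝ {A : Matrix n n 𝕜 | A.PosDef} := by
  intro A hA B hB a b ha hb hab
  rcases ha.eq_or_lt with rfl | ha
  · simpa [show b = 1 by linarith] using hB
  exact (hA.smul ha).add_posSemidef (hB.posSemidef.smul hb)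

variable [Fintype n] [DecidableEq n]

lemma IsHermitian.det_cfc {A : Matrix n n 𝕜} (hA : A.IsHermitian) (f : ℝ → ℝ) :
    (cfc f A).det = ∏ i, (f (hA.eigenvalues i) : 𝕜) := by
  rw [hA.cfc_eq, IsHermitian.cfc, det_map, det_diagonal]
  rfl

lemma PosDef.ofReal_re_det {A : Matrix n n 𝕜} (hA : A.PosDef) :
    ((RCLike.re A.det : ℝ) : 𝕜) = A.det := by
  obtain ⟨x, -, hx⟩ := RCLike.pos_iff_exists_ofReal.mp hA.det_pos
  rw [← hx, RCLike.ofReal_re]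

lemma PosDef.re_det_pos {A : Matrix n n 𝕜} (hA : A.PosDef) : 0 < RCLike.re A.det :=
  (RCLike.pos_iff.mp hA.det_pos).1

lemma PosDef.mul_log_det_le_log_det_smul_one_add_smul {M : Matrix n n 𝕜} (hM : M.PosDef)
    {a b : ℝ} (ha : 0 ≤ a) (hb : 0 ≤ b) (hab : a + b = 1) :
    b * Real.log (RCLike.re M.det) ≤ Real.log (RCLike.re (a • 1 + b • M).det) := by
  have hM_sa : IsSelfAdjoint M := hM.isHermitian
  have hcfc : a • 1 + b • M = cfc (fun x => a + b * x) M := by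
    rw [cfc_const_add a (fun x => b * x) M, cfc_const_mul_id b M,
      Algebra.algebraMap_eq_smul_one]
  set μ := hM.isHermitian.eigenvalues
  have hμ : ∀ i, 0 < μ i := hM.eigenvalues_pos
  have hμ' : ∀ i, 0 < a + b * μ i := fun i => by
    simpa using convex_Ioi (0 : ℝ) (Set.mem_Ioi.mpr one_pos) (hμ i) ha hb hab
  rw [hcfc, hM.isHermitian.det_cfc, hM.isHermitian.det_eq_prod_eigenvalues,
    ← RCLike.ofReal_prod, ← RCLike.ofReal_prod, RCLike.ofReal_re, RCLike.ofReal_re,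
    Real.log_prod fun i _ => (hμ i).ne', Real.log_prod fun i _ => (hμ' i).ne', mul_sum]
  refine sum_le_sum fun i _ => ?_
  simpa using strictConcaveOn_log_Ioi.concaveOn.2 (Set.mem_Ioi.mpr one_pos) (hμ i) ha hb hab

theorem concaveOn_log_det : ConcaveOn ℝ {A : Matrix n n 𝕜 | A.PosDef}
    (fun A => Real.log (RCLike.re A.det)) := by
  refine ⟨convex_setOf_posDef, fun A hA B hB a b ha hb hab => ?_⟩
  set S := CFC.sqrt A
  have hSS : S * S = A := CFC.sqrt_mul_sqrt_self A hA.posSemidef.nonneg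
  have hSstar : star S = S := (CFC.sqrt_nonneg A).isSelfAdjoint.star_eq
  have hS : IsUnit S := CFC.isUnit_sqrt_iff_isStrictlyPositive.mpr hA.isStrictlyPositive
  set M := S⁻¹ * B * S⁻¹
  have hM : M.PosDef := by
    have := (isUnit_nonsing_inv_iff.mpr hS).posDef_star_right_conjugate_iff.mpr hB
    rwa [star_eq_conjTranspose, conjTranspose_nonsing_inv, ← star_eq_conjTranspose, hSstar] at this
  have hB_eq : B = S * M * S := by
    simp only [M, ← mul_assoc, mul_nonsing_inv _ ((isUnit_iff_isUnit_det S).mp hS), one_mul]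
    rw [mul_assoc, nonsing_inv_mul _ ((isUnit_iff_isUnit_det S).mp hS), mul_one]
  have hcomb : a • A + b • B = S * (a • 1 + b • M) * S := by
    rw [hB_eq, ← hSS]
    simp only [mul_add, add_mul, mul_smul_comm, smul_mul_assoc, mul_one, mul_assoc]
  have hre : ∀ X : Matrix n n 𝕜,
      RCLike.re (S * X * S).det = RCLike.re A.det * RCLike.re X.det := fun X => by
    rw [det_mul, det_mul, mul_right_comm, ← det_mul, hSS, ← RCLike.re_ofReal_mul,
      hA.ofReal_re_det]
  have hC : (a • (1 : Matrix n n 𝕜) + b • M).PosDef :=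
    convex_setOf_posDef PosDef.one hM ha hb hab
  have hscalar := hM.mul_log_det_le_log_det_smul_one_add_smul ha hb hab
  simp only [smul_eq_mul]
  rw [hcomb, hre, Real.log_mul hA.re_det_pos.ne' hC.re_det_pos.ne', hB_eq, hre,
    Real.log_mul hA.re_det_pos.ne' hM.re_det_pos.ne']
  linear_combination hscalar + Real.log (RCLike.re A.det) * hab

variable [Fintype m]

def sumMulMulConjTranspose (s : Finset ι) (H : ι → Matrix n m 𝕜) :
    (ι → Matrix m m 𝕜) →ₗ[ℝ] Matrix n n 𝕜 where
  toFun Ks := ∑ j ∈ s, H j * Ks j * (H j)ᴴ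
  map_add' X Y := by simp [Matrix.mul_add, Matrix.add_mul, sum_add_distrib]
  map_smul' c X := by simp [smul_sum]

theorem concaveOn_log_det_sum_mul_mul_conjTranspose_add (s : Finset ι) (H : ι → Matrix n m 𝕜)
    {Λ : Matrix n n 𝕜} (hΛ : Λ.PosDef) :
    ConcaveOn ℝ {Ks : ι → Matrix m m 𝕜 | ∀ k, (Ks k).PosSemidef}
      fun Ks => Real.log (RCLike.re (∑ j ∈ s, H j * Ks j * (H j)ᴴ + Λ).det) := by
  let L : (ι → Matrix m m 𝕜) →ᵃ[ℝ] Matrix n n 𝕜 :=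
    (sumMulMulConjTranspose s H).toAffineMap + AffineMap.const ℝ _ Λ
  refine (concaveOn_log_det.comp_affineMap L).subset (fun Ks hKs => ?_)
    convex_setOf_forall_posSemidef
  exact PosDef.posSemidef_add
    (posSemidef_sum s fun j _ => (hKs j).mul_mul_conjTranspose_same (H j)) hΛ

end Matrix

-- By summation by parts the function is `∑ k ∈ range (N + 1), (a k - a (k - 1)) * g k`,
-- with `a (-1) = 0`.
theorem concaveOn_sum_range_mul_sub_add_mul {E : Type*} [AddCommMonoid E] [Module ℝ E]
    {s : Set E} {g : ℕ → E → ℝ} (hg : ∀ t, ConcaveOn ℝ s (g t)) {a : ℕ → ℝ} (ha : Monotone a)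
    (ha0 : 0 ≤ a 0) (N : ℕ) :
    ConcaveOn ℝ s fun x => ∑ k ∈ range N, a k * (g k x - g (k + 1) x) + a N * g N x := by
  induction N with
  | zero => simpa using (hg 0).smul ha0
  | succ N ih =>
    have hstep : (fun x => ∑ k ∈ range (N + 1), a k * (g k x - g (k + 1) x)
          + a (N + 1) * g (N + 1) x) =
        fun x => (∑ k ∈ range N, a k * (g k x - g (k + 1) x) + a N * g N x)
          + (a (N + 1) - a N) • g (N + 1) x := by
      funext x
      rw [sum_range_succ, smul_eq_mul]
      ring
    rw [hstep]
    exact ih.add ((hg _).smul (sub_nonneg.mpr (ha N.le_succ)))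

/-- Concavity of the weighted sum rate of the Gaussian vector multiple-access
channel with SIC decoding in order `1,…,K`: with weights
`0 ≤ α_1 ≤ … ≤ α_K`, the function
`(K_1,…,K_K) ↦ Σ_k α_k [log det(Σ_{j≥k} H_jK_jH_j† + Λ) − log det(Σ_{j>k} H_jK_jH_j† + Λ)]`
is concave on the product of positive semidefinite cones. -/
theorem weighted_sum_rate_concave
    {n m K : ℕ} (H : Fin K → Matrix (Fin n) (Fin m) ℂ)
    (Λ : Matrix (Fin n) (Fin n) ℂ) (hΛ : Λ.PosDef)
    (α : Fin K → ℝ) (hα0 : ∀ k, 0 ≤ α k)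
    (hαmono : ∀ k l : Fin K, k ≤ l → α k ≤ α l) :
    ConcaveOn ℝ
      { Ks : Fin K → Matrix (Fin m) (Fin m) ℂ | ∀ k, (Ks k).PosSemidef }
      (fun Ks : Fin K → Matrix (Fin m) (Fin m) ℂ =>
        ∑ k : Fin K, α k *
          (Real.log (∑ j ∈ Finset.univ.filter (fun j : Fin K => k ≤ j),
              H j * Ks j * (H j)ᴴ + Λ).det.re -
           Real.log (∑ j ∈ Finset.univ.filter (fun j : Fin K => k < j),
              H j * Ks j * (H j)ᴴ + Λ).det.re)) := by
  rcases K.eq_zero_or_pos with rfl | hK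
  · simp only [univ_eq_empty, sum_empty]
    exact concaveOn_const 0 convex_setOf_forall_posSemidef
  let a : ℕ → ℝ := fun t => α ⟨min t (K - 1), by omega⟩
  let g : ℕ → (Fin K → Matrix (Fin m) (Fin m) ℂ) → ℝ := fun t Ks =>
    Real.log (∑ j ∈ univ.filter (fun j : Fin K => t ≤ (j : ℕ)), H j * Ks j * (H j)ᴴ + Λ).det.re
  have ha : Monotone a := fun s t hst => hαmono _ _ (Fin.mk_le_mk.mpr (min_le_min_right _ hst))
  have hgK : ∀ Ks, g K Ks = Real.log Λ.det.re := fun Ks => by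
    simp [g, filter_false_of_mem fun (j : Fin K) _ => not_le.mpr j.isLt]
  have hg : ∀ t, ConcaveOn ℝ {Ks | ∀ k, (Ks k).PosSemidef} (g t) := fun t =>
    concaveOn_log_det_sum_mul_mul_conjTranspose_add _ H hΛ
  refine ((concaveOn_sum_range_mul_sub_add_mul hg ha (hα0 _) K).sub
    (convexOn_const (a K * Real.log Λ.det.re) convex_setOf_forall_posSemidef)).congr
    fun Ks _ => ?_
  rw [Pi.sub_apply, hgK, add_sub_cancel_right, ← Fin.sum_univ_eq_sum_range]
  refine sum_congr rfl fun k _ => ?_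
  simp only [a, min_eq_left (Nat.le_sub_one_of_lt k.isLt)]
  -- `k < j` unfolds to `k + 1 ≤ j` on `ℕ`
  rfl
end
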